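/- (Expected Doppler-cut expansion) For every real f, the normalized expected zero-delay cut satisfies E[|Λ_yy(0, f)|]/|Λ_yy(0, 0)| = (|sinc(π f T_p)|/M) · E[ ( M + 2 ∑_{p=1}^{M−1} ∑_{n=0}^{M−p−1} cos(2π f (p T_r − ε_{n+p} + ε_n)) )^{1/2} ], where |Λ_yy(0,0)| = M T_p and sinc(x) = sin(x)/x with sinc(0) = 1. -/

import Mathlib

open MeasureTheory ProbabilityTheory Real Finset

/-- Rectangular pulse of width `Tp`: equals `1` on `(0, Tp]` and `0` elsewhere. -/
noncomputable def pulse (Tp t : ℝ) : ℂ :=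
  if 0 < t ∧ t ≤ Tp then 1 else 0

/-- Pulse train of `M` pulses with nominal PRI `Tr`, pulse width `Tp`, and jitters `ε`. -/
noncomputable def train (M : ℕ) (Tr Tp : ℝ) (ε : ℕ → ℝ) (t : ℝ) : ℂ :=
  ∑ m ∈ Finset.range M, pulse Tp (t - m * Tr - ε m)

/-- Ambiguity function `Λ_uu(τ, f) = ∫ u(t) u*(t-τ) e^{-j2πft} dt`. -/
noncomputable def AF (u : ℝ → ℂ) (τ f : ℝ) : ℂ :=
  ∫ t : ℝ, u t * (starRingEnd ℂ) (u (t - τ)) * Complex.exp (-(2 * Real.pi * f * t) * Complex.I)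

/-- `sinc x = sin x / x`, with `sinc 0 = 1`. -/
noncomputable def sinc (x : ℝ) : ℝ := if x = 0 then 1 else Real.sin x / x

/-!
While the jitters stay in `(-ρ/2, ρ/2)` and `ρ ≤ T_r - 2 T_p`, the pulses occupy pairwise disjoint
intervals `(m T_r + ε_m, m T_r + ε_m + T_p]`, so `y` is the indicator of their union and
`Λ_yy(0, f)` is the Fourier transform of one pulse times the phase sum `∑ₘ e^{-j2πf(m T_r + ε_m)}`.
The squared modulus of that sum, grouped by lags `p`, is
`M + 2 ∑ₚ ∑ₙ cos(2πf(p T_r + ε_{n+p} - ε_n))`.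
The jitters enter the claimed formula with the opposite sign; the two expectations agree because
the jitters are independent with symmetric laws, so the law of the jitter vector is invariant
under `ε ↦ -ε`.
-/

theorem sum_Ico_sum_range_lag_succ {β : Type*} [AddCommMonoid β] (g : ℕ → ℕ → β) (M : ℕ) :
    ∑ p ∈ Ico 1 (M + 1), ∑ n ∈ range (M + 1 - p), g n (n + p)
      = ∑ p ∈ Ico 1 M, ∑ n ∈ range (M - p), g n (n + p) + ∑ n ∈ range M, g n M := by
  have hsplit : ∀ p ∈ Ico 1 (M + 1), ∑ n ∈ range (M + 1 - p), g n (n + p)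
      = ∑ n ∈ range (M - p), g n (n + p) + g (M - p) M := by
    intro p hp
    rw [mem_Ico] at hp
    rw [show M + 1 - p = M - p + 1 by omega, sum_range_succ, Nat.sub_add_cancel (by omega)]
  have hlast : ∑ p ∈ Ico 1 (M + 1), ∑ n ∈ range (M - p), g n (n + p)
      = ∑ p ∈ Ico 1 M, ∑ n ∈ range (M - p), g n (n + p) :=
    (sum_subset (Ico_subset_Ico_right M.le_succ) fun p hp hpM => by
      simp only [mem_Ico] at hp hpM
      simp [show M - p = 0 by omega]).symm
  have hreflect : ∑ p ∈ Ico 1 (M + 1), g (M - p) M = ∑ n ∈ range M, g n M := by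
    rw [sum_Ico_reflect (fun n => g n M) 1 le_rfl, range_eq_Ico]
    simp
  rw [sum_congr rfl hsplit, sum_add_distrib, hlast, hreflect]

theorem sum_range_sum_range_eq_diag_add_lags {β : Type*} [AddCommMonoid β] (h : ℕ → ℕ → β)
    (M : ℕ) :
    ∑ m ∈ range M, ∑ n ∈ range M, h m n
      = ∑ m ∈ range M, h m m
        + ∑ p ∈ Ico 1 M, ∑ n ∈ range (M - p), (h n (n + p) + h (n + p) n) := by
  induction M with
  | zero => simp
  | succ M ih =>
    rw [sum_Ico_sum_range_lag_succ (fun n k => h n k + h k n)]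
    simp only [sum_range_succ, sum_add_distrib, ih]
    abel

theorem norm_sum_exp_mul_I (M : ℕ) (θ : ℕ → ℝ) :
    ‖∑ m ∈ range M, Complex.exp (θ m * Complex.I)‖
      = √(M + 2 * ∑ p ∈ Ico 1 M, ∑ n ∈ range (M - p), cos (θ (n + p) - θ n)) := by
  set z := ∑ m ∈ range M, Complex.exp (θ m * Complex.I)
  have hz : z * (starRingEnd ℂ) z
      = ∑ m ∈ range M, ∑ n ∈ range M, Complex.exp ((θ m - θ n : ℝ) * Complex.I) := by
    simp only [z, map_sum, sum_mul_sum, ← Complex.exp_conj, ← Complex.exp_add]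
    push_cast
    congr! 3
    simp [Complex.conj_ofReal]
    ring
  have hsq : ‖z‖ ^ 2 = ∑ m ∈ range M, ∑ n ∈ range M, cos (θ m - θ n) := by
    rw [Complex.sq_norm, ← Complex.ofReal_re (Complex.normSq z), ← Complex.mul_conj, hz]
    simp only [Complex.re_sum, Complex.exp_ofReal_mul_I_re]
  rw [← Real.sqrt_sq (norm_nonneg z), hsq, sum_range_sum_range_eq_diag_add_lags]
  simp only [sub_self, cos_zero, sum_const, card_range, nsmul_eq_mul, mul_one, mul_sum]
  congr! 4 with p _ n _
  rw [← cos_neg, neg_sub]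
  ring

theorem pulse_sub_eq_indicator (Tp a t : ℝ) :
    pulse Tp (t - a) = (Set.Ioc a (a + Tp)).indicator 1 t := by
  simp only [pulse, Set.indicator_apply, Set.mem_Ioc, sub_pos, sub_le_iff_le_add', Pi.one_apply]

theorem train_eq_indicator_biUnion {M : ℕ} {Tr Tp : ℝ} {e : ℕ → ℝ}
    (hdisj : (range M : Set ℕ).PairwiseDisjoint
      fun m => Set.Ioc (m * Tr + e m) (m * Tr + e m + Tp)) :
    train M Tr Tp e
      = (⋃ m ∈ range M, Set.Ioc (m * Tr + e m) (m * Tr + e m + Tp)).indicator 1 := by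
  ext t
  simp only [indicator_biUnion_apply _ _ hdisj, train, sub_sub, pulse_sub_eq_indicator]

theorem AF_indicator_one_zero {U : Set ℝ} (hU : MeasurableSet U) (f : ℝ) :
    AF (U.indicator 1) 0 f = ∫ t in U, Complex.exp (-(2 * π * f * t) * Complex.I) := by
  rw [AF, ← integral_indicator hU]
  congr 1 with t
  by_cases ht : t ∈ U <;> simp [ht]

theorem integral_exp_add_eq_exp_mul (f a T : ℝ) :
    ∫ t in a..a + T, Complex.exp (-(2 * π * f * t) * Complex.I)
      = Complex.exp (-(2 * π * f * a) * Complex.I)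
        * ∫ t in 0..T, Complex.exp (-(2 * π * f * t) * Complex.I) := by
  have hshift := intervalIntegral.integral_comp_add_left
    (fun t : ℝ => Complex.exp (-(2 * π * f * t) * Complex.I)) a (a := 0) (b := T)
  rw [add_zero] at hshift
  rw [← hshift, ← intervalIntegral.integral_const_mul]
  congr 1 with t
  rw [← Complex.exp_add]
  push_cast
  ring_nf

theorem norm_integral_exp_eq_mul_abs_sinc (f : ℝ) {T : ℝ} (hT : 0 ≤ T) :
    ‖∫ t in 0..T, Complex.exp (-(2 * π * f * t) * Complex.I)‖
      = T * |_root_.sinc (π * f * T)| := by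
  rcases eq_or_ne f 0 with rfl | hf
  · simp [_root_.sinc, abs_of_nonneg hT]
  set c : ℂ := -(2 * π * f : ℂ) * Complex.I
  have hc : c ≠ 0 := by simp [c, hf, pi_ne_zero]
  have hcT : c * T = Complex.I * ((-(2 * π * f * T) : ℝ) : ℂ) := by push_cast; ring
  have hnorm_c : ‖c‖ = 2 * π * |f| := by simp [c, abs_of_pos pi_pos]
  simp_rw [show ∀ t : ℝ, -(2 * π * f * t : ℂ) * Complex.I = c * t from fun t => by ring]
  rw [integral_exp_mul_complex hc, Complex.ofReal_zero, mul_zero, Complex.exp_zero, norm_div,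
    hcT, Complex.norm_exp_I_mul_ofReal_sub_one, hnorm_c,
    show -(2 * π * f * T) / 2 = -(π * f * T) by ring, sin_neg, norm_mul, norm_neg,
    Real.norm_eq_abs, Real.norm_eq_abs]
  rcases hT.eq_or_lt with rfl | hT
  · simp
  have hx : π * f * T ≠ 0 := by positivity
  rw [show _root_.sinc (π * f * T) = Real.sinc (π * f * T) from rfl, Real.sinc_of_ne_zero hx,
    abs_div, abs_mul, abs_mul, abs_of_pos pi_pos, abs_of_pos hT]
  field_simp
  ring

theorem norm_AF_train_zero {M : ℕ} {Tr Tp : ℝ} (hTp : 0 ≤ Tp) {e : ℕ → ℝ}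
    (hdisj : (range M : Set ℕ).PairwiseDisjoint
      fun m => Set.Ioc (m * Tr + e m) (m * Tr + e m + Tp)) (f : ℝ) :
    ‖AF (train M Tr Tp e) 0 f‖ = Tp * |_root_.sinc (π * f * Tp)| *
      ‖∑ m ∈ range M, Complex.exp (-(2 * π * f * (m * Tr + e m)) * Complex.I)‖ := by
  have hint : ∀ m ∈ range M,
      IntegrableOn (fun t : ℝ => Complex.exp (-(2 * π * f * t) * Complex.I))
        (Set.Ioc (m * Tr + e m) (m * Tr + e m + Tp)) :=
    fun m _ => (by fun_prop : Continuous _).integrableOn_Ioc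
  rw [train_eq_indicator_biUnion hdisj,
    AF_indicator_one_zero (Finset.measurableSet_biUnion _ fun m _ => measurableSet_Ioc),
    integral_biUnion_finset _ (fun m _ => measurableSet_Ioc) hdisj hint]
  simp_rw [← intervalIntegral.integral_of_le (le_add_of_nonneg_right hTp),
    integral_exp_add_eq_exp_mul, ← sum_mul, norm_mul, norm_integral_exp_eq_mul_abs_sinc f hTp]
  push_cast
  ring

theorem pairwiseDisjoint_Ioc_of_mem_Ioo {M : ℕ} {Tr Tp ρ : ℝ} (hTp : 0 ≤ Tp)
    (hρTr : ρ + Tp ≤ Tr) {e : ℕ → ℝ} (he : ∀ m < M, e m ∈ Set.Ioo (-(ρ / 2)) (ρ / 2)) :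
    (range M : Set ℕ).PairwiseDisjoint fun m => Set.Ioc (m * Tr + e m) (m * Tr + e m + Tp) := by
  have hsep : ∀ m n, m < n → n < M → m * Tr + e m + Tp ≤ n * Tr + e n := by
    intro m n hmn hn
    obtain ⟨hm1, hm2⟩ := he m (hmn.trans hn)
    obtain ⟨hn1, hn2⟩ := he n hn
    have hmn' : (m : ℝ) + 1 ≤ n := by exact_mod_cast hmn
    nlinarith [mul_le_mul_of_nonneg_right hmn' (by linarith : 0 ≤ Tr)]
  intro m hm n hn hne
  simp only [coe_range, Set.mem_Iio] at hm hn
  rcases hne.lt_or_gt with h | h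
  · exact Set.Ioc_disjoint_Ioc_of_le (hsep m n h hn)
  · exact (Set.Ioc_disjoint_Ioc_of_le (hsep n m h hm)).symm

theorem MeasureTheory.Measure.map_neg_restrict_of_neg_eq {G : Type*} [AddGroup G]
    [MeasurableSpace G] [MeasurableNeg G] (ν : Measure G) [ν.IsNegInvariant] {s : Set G}
    (hs : -s = s) : (ν.restrict s).map Neg.neg = ν.restrict s := by
  calc (ν.restrict s).map Neg.neg = (ν.restrict (Neg.neg ⁻¹' s)).map Neg.neg := by
        rw [show Neg.neg ⁻¹' s = s from hs]
    _ = (ν.map Neg.neg).restrict s := (measurableEmbedding_neg.restrict_map _ _).symm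
    _ = ν.restrict s := by rw [Measure.map_neg_eq_self]

namespace ProbabilityTheory.iIndepFun

variable {Ω ι : Type*} [MeasurableSpace Ω] {μ : Measure Ω} [Fintype ι]
  {β : ι → Type*} [∀ i, MeasurableSpace (β i)] {X : ∀ i, Ω → β i} {φ : ∀ i, β i → β i}

theorem map_pi_comp_eq (hind : iIndepFun X μ) (hX : ∀ i, Measurable (X i))
    (hφ : ∀ i, Measurable (φ i)) (hlaw : ∀ i, (μ.map (X i)).map (φ i) = μ.map (X i)) :
    μ.map (fun ω i => φ i (X i ω)) = μ.map (fun ω i => X i ω) := by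
  have hφX := (hind.comp φ hφ).map_fun_eq_pi_map fun i => ((hφ i).comp (hX i)).aemeasurable
  refine hφX.trans ?_
  rw [hind.map_fun_eq_pi_map fun i => (hX i).aemeasurable]
  congr 1 with i : 1
  rw [← hlaw i, Measure.map_map (hφ i) (hX i)]

theorem integral_pi_comp_eq {E : Type*} [NormedAddCommGroup E] [NormedSpace ℝ E]
    (hind : iIndepFun X μ) (hX : ∀ i, Measurable (X i)) (hφ : ∀ i, Measurable (φ i))
    (hlaw : ∀ i, (μ.map (X i)).map (φ i) = μ.map (X i)) {F : (∀ i, β i) → E}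
    (hF : StronglyMeasurable F) :
    ∫ ω, F (fun i => φ i (X i ω)) ∂μ = ∫ ω, F (fun i => X i ω) ∂μ := by
  have hφX : Measurable fun ω i => φ i (X i ω) :=
    measurable_pi_lambda _ fun i => (hφ i).comp (hX i)
  rw [← integral_map hφX.aemeasurable hF.aestronglyMeasurable, hind.map_pi_comp_eq hX hφ hlaw,
    integral_map (measurable_pi_lambda _ hX).aemeasurable hF.aestronglyMeasurable]

end ProbabilityTheory.iIndepFun

theorem norm_sum_exp_pulse_phase (M : ℕ) (Tr f : ℝ) (e : ℕ → ℝ) :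
    ‖∑ m ∈ range M, Complex.exp (-(2 * π * f * (m * Tr + e m)) * Complex.I)‖
      = √(M + 2 * ∑ p ∈ Ico 1 M, ∑ n ∈ range (M - p),
          cos (2 * π * f * (p * Tr + e (n + p) - e n))) := by
  convert norm_sum_exp_mul_I M (fun m => -(2 * π * f * (m * Tr + e m))) using 6 with p _ n _
  · push_cast; rfl
  · rw [← cos_neg]
    push_cast
    ring_nf

theorem ae_forall_lt_mem_Ioo_of_map_eq {Ω : Type*} [MeasurableSpace Ω] {μ : Measure Ω} {M : ℕ}
    {ρ : ℝ} (hρ : 0 < ρ) {ε : ℕ → Ω → ℝ} (hε0 : ∀ ω, ε 0 ω = 0) (hmeas : ∀ m, Measurable (ε m))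
    (hdist : ∀ m, 1 ≤ m → m ≤ M - 1 →
      Measure.map (ε m) μ = (ENNReal.ofReal ρ)⁻¹ • volume.restrict (Set.Ioo (-(ρ / 2)) (ρ / 2))) :
    ∀ᵐ ω ∂μ, ∀ m < M, ε m ω ∈ Set.Ioo (-(ρ / 2)) (ρ / 2) := by
  refine ae_all_iff.2 fun m => ?_
  rcases Nat.eq_zero_or_pos m with rfl | hm
  · exact .of_forall fun ω _ => by simp [hε0, hρ]
  by_cases hmM : m < M
  · have hunif := Measure.ae_smul_measure (ae_restrict_mem measurableSet_Ioo)
      (μ := volume.restrict (Set.Ioo (-(ρ / 2)) (ρ / 2))) (ENNReal.ofReal ρ)⁻¹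
    rw [← hdist m hm (by omega)] at hunif
    filter_upwards [ae_of_ae_map (hmeas m).aemeasurable hunif] with ω hω _ using hω
  · exact .of_forall fun ω h => absurd h hmM

theorem map_neg_map_eq_of_map_eq {Ω : Type*} [MeasurableSpace Ω] {μ : Measure Ω} {M : ℕ}
    {ρ : ℝ} {ε : ℕ → Ω → ℝ} (hε0 : ∀ ω, ε 0 ω = 0) (hmeas : ∀ m, Measurable (ε m))
    (hdist : ∀ m, 1 ≤ m → m ≤ M - 1 →
      Measure.map (ε m) μ = (ENNReal.ofReal ρ)⁻¹ • volume.restrict (Set.Ioo (-(ρ / 2)) (ρ / 2)))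
    (i : Fin M) : (μ.map (ε i)).map Neg.neg = μ.map (ε i) := by
  rcases Nat.eq_zero_or_pos i with hi | hi
  · rw [Measure.map_map measurable_neg (hmeas i)]
    congr 1 with ω
    simp [hi, hε0]
  · rw [hdist i hi (by omega), Measure.map_smul,
      Measure.map_neg_restrict_of_neg_eq _ (by rw [Set.neg_Ioo, neg_neg])]

theorem doppler_expected_expansion_general
    {Ω : Type*} [MeasurableSpace Ω] (μ : Measure Ω) [IsProbabilityMeasure μ]
    (M : ℕ) (Tr Tp ρ : ℝ) (hTp : 0 < Tp) (hρ : 0 < ρ)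
    (hρTr : ρ ≤ Tr - 2 * Tp)
    (ε : ℕ → Ω → ℝ) (hε0 : ∀ ω, ε 0 ω = 0)
    (hmeas : ∀ m, Measurable (ε m))
    (hdist : ∀ m, 1 ≤ m → m ≤ M - 1 →
      Measure.map (ε m) μ = (ENNReal.ofReal ρ)⁻¹ • volume.restrict (Set.Ioo (-(ρ / 2)) (ρ / 2)))
    (hindep : iIndepFun (fun m : Fin M => ε (m : ℕ)) μ)
    (f : ℝ) :
    (∫ ω, ‖AF (train M Tr Tp (fun k => ε k ω)) 0 f‖ ∂μ) / ((M : ℝ) * Tp)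
      = |_root_.sinc (Real.pi * f * Tp)| / M *
        ∫ ω, Real.sqrt ((M : ℝ) + 2 * ∑ p ∈ Finset.Ico 1 M, ∑ n ∈ Finset.range (M - p),
          Real.cos (2 * Real.pi * f * ((p : ℝ) * Tr - ε (n + p) ω + ε n ω))) ∂μ := by
  set A : (Fin M → ℝ) → ℝ := fun v =>
    ‖∑ i : Fin M, Complex.exp (-(2 * π * f * (i * Tr + v i)) * Complex.I)‖
  have hA : StronglyMeasurable A := (by fun_prop : Continuous A).stronglyMeasurable
  have hnorm : ∀ᵐ ω ∂μ, ‖AF (train M Tr Tp (fun k => ε k ω)) 0 f‖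
      = Tp * |_root_.sinc (π * f * Tp)| * A (fun i => ε i ω) := by
    filter_upwards [ae_forall_lt_mem_Ioo_of_map_eq hρ hε0 hmeas hdist] with ω hω
    rw [norm_AF_train_zero hTp.le (pairwiseDisjoint_Ioc_of_mem_Ioo hTp.le (by linarith) hω),
      ← Fin.sum_univ_eq_sum_range
        (fun m => Complex.exp (-(2 * π * f * (m * Tr + ε m ω)) * Complex.I))]
  have hflip : ∀ ω, A (fun i => -ε i ω) = √(M + 2 * ∑ p ∈ Ico 1 M, ∑ n ∈ range (M - p),
      cos (2 * π * f * (p * Tr - ε (n + p) ω + ε n ω))) := by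
    intro ω
    have h := norm_sum_exp_pulse_phase M Tr f (fun m => -ε m ω)
    rw [← Fin.sum_univ_eq_sum_range] at h
    simpa only [sub_neg_eq_add, ← sub_eq_add_neg] using h
  rw [integral_congr_ae hnorm, integral_const_mul,
    ← hindep.integral_pi_comp_eq (fun i => hmeas i) (fun _ => measurable_neg)
      (map_neg_map_eq_of_map_eq hε0 hmeas hdist) hA, funext hflip,
    mul_comm (M : ℝ) Tp, mul_assoc, mul_div_mul_left _ _ hTp.ne', div_mul_eq_mul_div]

/-- **Expected Doppler-cut expansion.** For every `f`,
`E[|Λ_yy(0,f)|]/(M Tp) = (|sinc(π f Tp)|/M) E[√(M + 2 ∑_{p=1}^{M-1} ∑_{n=0}^{M-p-1}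
cos(2π f (p Tr - ε_{n+p} + ε_n)))]`. -/
theorem doppler_expected_expansion
    {Ω : Type*} [MeasurableSpace Ω] (μ : Measure Ω) [IsProbabilityMeasure μ]
    (M : ℕ) (hM : 1 ≤ M) (Tr Tp ρ : ℝ) (hTp : 0 < Tp) (hρ : 0 < ρ)
    (hρTr : ρ ≤ Tr - 2 * Tp)
    (ε : ℕ → Ω → ℝ) (hε0 : ∀ ω, ε 0 ω = 0)
    (hmeas : ∀ m, Measurable (ε m))
    (hdist : ∀ m, 1 ≤ m → m ≤ M - 1 →
      Measure.map (ε m) μ = (ENNReal.ofReal ρ)⁻¹ • volume.restrict (Set.Ioo (-(ρ / 2)) (ρ / 2)))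
    (hindep : iIndepFun (fun m : Fin M => ε (m : ℕ)) μ)
    (f : ℝ) :
    (∫ ω, ‖AF (train M Tr Tp (fun k => ε k ω)) 0 f‖ ∂μ) / ((M : ℝ) * Tp)
      = |_root_.sinc (Real.pi * f * Tp)| / M *
        ∫ ω, Real.sqrt ((M : ℝ) + 2 * ∑ p ∈ Finset.Ico 1 M, ∑ n ∈ Finset.range (M - p),
          Real.cos (2 * Real.pi * f * ((p : ℝ) * Tr - ε (n + p) ω + ε n ω))) ∂μ :=
  doppler_expected_expansion_general μ M Tr Tp ρ hTp hρ hρTr ε hε0 hmeas hdist hindep f
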